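/- arXiv:1212.0514 — 2 statements merged into one kernel-verified Lean document; each statement's English description precedes it below -/
import Mathlib

section
/- Let β be a commutation factor on an abelian group G, u(g) = β(g,g), and define κ : G × G → k^× by κ(g,h) = -1 if u(g) = u(h) = -1, and κ(g,h) = 1 otherwise. Then κ is a commutation factor on G, the product βκ is a commutation factor on G, and (βκ)(g,g) = 1 for all g ∈ G. -/
open Classical in
/-- Given a commutation factor `β` on `G` with `u(g) = β(g,g)`, the map `κ` defined by
`κ(g,h) = -1` if `u(g) = u(h) = -1` and `κ(g,h) = 1` otherwise is a commutation factor,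
the product `βκ` is a commutation factor, and `(βκ)(g,g) = 1` for all `g`. -/
theorem stmt3 {k : Type*} [Field k] [CharZero k] {G : Type*} [CommGroup G] (β : G → G → kˣ)
    (hβ1 : ∀ g h l, β (g * h) l = β g l * β h l)
    (hβ2 : ∀ g h l, β g (h * l) = β g h * β g l)
    (hskew : ∀ g h, β g h * β h g = 1) :
    let κ : G → G → kˣ := fun g h => if β g g = -1 ∧ β h h = -1 then -1 else 1
    (∀ g h l, κ (g * h) l = κ g l * κ h l) ∧
    (∀ g h l, κ g (h * l) = κ g h * κ g l) ∧
    (∀ g h, κ g h * κ h g = 1) ∧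
    (∀ g h l, β (g * h) l * κ (g * h) l = (β g l * κ g l) * (β h l * κ h l)) ∧
    (∀ g h l, β g (h * l) * κ g (h * l) = (β g h * κ g h) * (β g l * κ g l)) ∧
    (∀ g h, (β g h * κ g h) * (β h g * κ h g) = 1) ∧
    (∀ g, β g g * κ g g = 1) := by
  intro κ
  have hne : (-1 : kˣ) ≠ 1 := by
    intro h
    have := congrArg Units.val h
    norm_num at this
  have hpm : ∀ g, β g g = 1 ∨ β g g = -1 := by
    intro g
    have h' : (β g g : k) * β g g = 1 := by
      have := congrArg Units.val (hskew g g); push_cast at this; exact this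
    rcases mul_self_eq_one_iff.mp h' with h1 | h1
    · left; exact Units.ext h1
    · right; exact Units.ext (by simpa using h1)
  have hom : ∀ g h, β (g * h) (g * h) = β g g * β h h := by
    intro g h
    rw [hβ1, hβ2, hβ2]
    calc (β g g * β g h) * (β h g * β h h)
        = (β g h * β h g) * (β g g * β h h) := by ac_rfl
      _ = β g g * β h h := by rw [hskew, one_mul]
  have hk1 : ∀ g h l, κ (g * h) l = κ g l * κ h l := by
    intro g h l
    show (if β (g*h) (g*h) = -1 ∧ β l l = -1 then (-1:kˣ) else 1) = _
    rw [hom]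
    by_cases hl : β l l = -1
    · rcases hpm g with hg | hg <;> rcases hpm h with hh | hh <;>
        simp [κ, hg, hh, hl, hne, hne.symm]
    · simp [κ, hl]
  have hk2 : ∀ g h l, κ g (h * l) = κ g h * κ g l := by
    intro g h l
    show (if β g g = -1 ∧ β (h*l) (h*l) = -1 then (-1:kˣ) else 1) = _
    rw [hom]
    by_cases hg : β g g = -1
    · rcases hpm h with hh | hh <;> rcases hpm l with hl | hl <;>
        simp [κ, hg, hh, hl, hne, hne.symm]
    · simp [κ, hg]
  have hk3 : ∀ g h, κ g h * κ h g = 1 := by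
    intro g h
    by_cases hg : β g g = -1 <;> by_cases hh : β h h = -1 <;> simp [κ, hg, hh]
  refine ⟨hk1, hk2, hk3, ?_, ?_, ?_, ?_⟩
  · intro g h l; rw [hβ1, hk1, mul_mul_mul_comm]
  · intro g h l; rw [hβ2, hk2, mul_mul_mul_comm]
  · intro g h
    calc (β g h * κ g h) * (β h g * κ h g)
        = (β g h * β h g) * (κ g h * κ h g) := mul_mul_mul_comm ..
      _ = 1 := by rw [hskew, hk3, one_mul]
  · intro g
    rcases hpm g with hg | hg <;> simp [κ, hg, hne, hne.symm]
end

section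
/- Let Γ = C₃ = ⟨γ⟩, L = C₇ = ⟨l⟩, with l^k ◁ γ^j = l^{2^j k}, and let ξ ∈ k be a primitive 7-th root of unity. Define f̃ : Γ → (k^×)^L by f̃_1 ≡ 1, f̃_γ(l^k) = ξ^k, f̃_{γ²}(l^k) = ξ^{3k}. Then f̃ satisfies the cocycle conditions: f̃_γ(1) = 1 for all γ ∈ Γ; f̃_1(x) = 1 for all x ∈ L; f̃_{γη}(x) = f̃_γ(x) f̃_η(x ◁ γ) for all x ∈ L, γ, η ∈ Γ; and f̃_γ(xy) = f̃_γ(x) f̃_γ(y) for all x, y ∈ L, γ ∈ Γ. -/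
/-- The right action of `Γ = C₃` on `L = C₇`, `l^k ◁ γ^j = l^{2^j k}` (written additively). -/
def rAct7 (x : ZMod 7) (γ : ZMod 3) : ZMod 7 := 2 ^ γ.val * x

/-- The map `f̃ : Γ → (kˣ)^L` with `f̃_1 = 1`, `f̃_γ(lᵏ) = ξᵏ`, `f̃_{γ²}(lᵏ) = ξ^{3k}`. -/
def fTil {k : Type*} [Field k] (ξ : k) (γ : ZMod 3) (x : ZMod 7) : k :=
  ξ ^ ((if γ = 1 then 1 else if γ = 2 then 3 else 0) * x.val)

lemma pow_mod7 {k : Type*} [Field k] (ξ : k) (hξ7 : ξ ^ 7 = 1) (a b : ℕ)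
    (h : a % 7 = b % 7) : ξ ^ a = ξ ^ b := by
  have key : ∀ n : ℕ, ξ ^ n = ξ ^ (n % 7) := by
    intro n
    conv_lhs => rw [← Nat.div_add_mod n 7]
    rw [pow_add, pow_mul, hξ7, one_pow, one_mul]
  rw [key a, key b, h]

/-- The map `f̃` satisfies the 1-cocycle conditions \eqref{cyc1}–\eqref{cyc4}. -/
theorem stmt11 {k : Type*} [Field k] [IsAlgClosed k] [CharZero k]
    (ξ : k) (hξ7 : ξ ^ 7 = 1) (hξ1 : ξ ≠ 1) :
    (∀ x : ZMod 7, fTil ξ 1 x = ξ ^ x.val) ∧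
    (∀ x : ZMod 7, fTil ξ 2 x = ξ ^ (3 * x.val)) ∧
    (∀ γ : ZMod 3, fTil ξ γ 0 = 1) ∧
    (∀ x : ZMod 7, fTil ξ 0 x = 1) ∧
    (∀ (γ η : ZMod 3) (x : ZMod 7), fTil ξ (γ + η) x = fTil ξ γ x * fTil ξ η (rAct7 x γ)) ∧
    (∀ (γ : ZMod 3) (x y : ZMod 7), fTil ξ γ (x + y) = fTil ξ γ x * fTil ξ γ y) := by
  have h21 : (2 : ZMod 3) ≠ 1 := by decide
  have h01 : (0 : ZMod 3) ≠ 1 := by decide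
  have h02 : (0 : ZMod 3) ≠ 2 := by decide
  refine ⟨fun x => by simp [fTil], fun x => by simp [fTil, h21], ?_, ?_, ?_, ?_⟩
  · intro γ; simp [fTil]
  · intro x; simp [fTil, h01, h02]
  · intro γ η x
    rw [fTil, fTil, fTil, ← pow_add]
    apply pow_mod7 ξ hξ7
    revert γ η x; decide
  · intro γ x y
    rw [fTil, fTil, fTil, ← pow_add]
    apply pow_mod7 ξ hξ7
    revert γ x y; decide
end
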